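/- arXiv:1908.06915 — 2 statements merged into one kernel-verified Lean document; each statement's English description precedes it below -/
import Mathlib

section
/- Let A be a sectorial operator of angle θ ∈ (0,π) in a Banach space X₀ (possibly non-invertible) and σ ∈ (0,1). Define for λ in the open sector of angle π(1−σ) the operator I_σ(λ) = (sin(πσ)/σ) ∫₀^∞ s^σ / ((s^σ + λe^{iπσ})(s^σ + λe^{−iπσ})) (A+s)⁻¹ ds. Then λ ↦ I_σ(λ) is analytic on the open sector S°_{π(1−σ)}, and for λ, λ₀ in this sector one has I_σ(λ) − I_σ(λ₀) = (sin(πσ)/σ) ∫₀^∞ Θ(λ,λ₀,s)(A+s)⁻¹ ds, where Θ(λ,λ₀,s) = (λ₀−λ)s^σ(2s^σcos(πσ)+λ+λ₀) / ((s^σ+λe^{iπσ})(s^σ+λe^{−iπσ})(s^σ+λ₀e^{iπσ})(s^σ+λ₀e^{−iπσ})). -/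
/-!
Write `e = exp(iπσ)` and `x = s^σ > 0`. The integrand of `I_σ(λ)` is the rational kernel
`x / ((x + λe)(x + λē))` times `(A + s)⁻¹`. For `λ` in the open sector `|arg λ| < π(1 - σ)`,
`arg (λe^{±iπσ}) = arg λ ± πσ` stays inside `(-π, π)`, so
`|x + λe^{±iπσ}|² ≥ ½(1 + cos(arg λ ± πσ)) (x + |λ|)²`, with a constant that is locally uniform
in `λ`. Consequently the `λ`-derivative of the integrand near `λ₀` is bounded by a constant times
the norm of the (integrable) integrand at `λ₀`; differentiation under the integral sign makes
`I_σ` holomorphic, hence analytic, on the sector. The difference formula is the partial-fraction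
identity for the kernel, using `e + ē = 2 cos πσ` and `eē = 1`.
-/

open MeasureTheory Set
open scoped Real Topology

noncomputable section

universe u

variable {X : Type u} [NormedAddCommGroup X] [NormedSpace ℂ X]

/-- The closed sector of half-angle `θ` around the positive real axis (contains `0`). -/
def Sector (θ : ℝ) : Set ℂ := {z : ℂ | |z.arg| ≤ θ}

/-- `R` is the resolvent `(A + lam)⁻¹` of the (unbounded) operator `A`. -/
def IsResolventAt (A : X →ₗ.[ℂ] X) (lam : ℂ) (R : X →L[ℂ] X) : Prop :=
  (∀ x : X, ∃ h : R x ∈ A.domain, A ⟨R x, h⟩ + lam • R x = x) ∧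
  (∀ u : A.domain, R (A u + lam • (u : X)) = (u : X))

variable [CompleteSpace X]

/-- The integrand of `I_σ(λ)`. -/
def IsigKer (σ : ℝ) (lam : ℂ) (s : ℝ) : ℂ :=
  (((s ^ σ : ℝ)) : ℂ) /
    (((((s ^ σ : ℝ)) : ℂ) + lam * Complex.exp ((Real.pi * σ : ℂ) * Complex.I)) *
     ((((s ^ σ : ℝ)) : ℂ) + lam * Complex.exp (-(Real.pi * σ : ℂ) * Complex.I)))

/-- `I_σ(λ) = (sin(πσ)/σ) ∫₀^∞ s^σ/((s^σ+λe^{iπσ})(s^σ+λe^{-iπσ})) (A+s)⁻¹ ds`,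
expressed through the resolvent family `R` of `A`. -/
def Isig (R : ℂ → X →L[ℂ] X) (σ : ℝ) (lam : ℂ) : X →L[ℂ] X :=
  (((Real.sin (Real.pi * σ) / σ : ℝ)) : ℂ) •
    ∫ s in Ioi (0 : ℝ), IsigKer σ lam s • R (s : ℂ)

/-- The kernel `Θ(λ,λ₀,s)`. -/
def ThetaKer (σ : ℝ) (lam lam0 : ℂ) (s : ℝ) : ℂ :=
  ((lam0 - lam) * (((s ^ σ : ℝ)) : ℂ) *
      (2 * (((s ^ σ : ℝ)) : ℂ) * ((Real.cos (Real.pi * σ) : ℝ) : ℂ) + lam + lam0)) /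
    (((((s ^ σ : ℝ)) : ℂ) + lam * Complex.exp ((Real.pi * σ : ℂ) * Complex.I)) *
     ((((s ^ σ : ℝ)) : ℂ) + lam * Complex.exp (-(Real.pi * σ : ℂ) * Complex.I)) *
     ((((s ^ σ : ℝ)) : ℂ) + lam0 * Complex.exp ((Real.pi * σ : ℂ) * Complex.I)) *
     ((((s ^ σ : ℝ)) : ℂ) + lam0 * Complex.exp (-(Real.pi * σ : ℂ) * Complex.I)))


section

open Complex

lemma re_mul_exp_mul_I (lam : ℂ) (t : ℝ) :
    (lam * exp (t * I)).re = ‖lam‖ * Real.cos (lam.arg + t) := by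
  conv_lhs => rw [← norm_mul_exp_arg_mul_I lam]
  rw [mul_assoc, ← exp_add, ← add_mul, ← ofReal_add, re_ofReal_mul, exp_ofReal_mul_I_re]

lemma one_add_cos_mul_sq_le_norm_sq (lam : ℂ) (t : ℝ) {x : ℝ} (hx : 0 ≤ x) :
    (1 + Real.cos (lam.arg + t)) / 2 * (x + ‖lam‖) ^ 2 ≤ ‖(x : ℂ) + lam * exp (t * I)‖ ^ 2 := by
  set w := lam * exp (t * I)
  have hre : w.re = ‖lam‖ * Real.cos (lam.arg + t) := re_mul_exp_mul_I lam t
  have hsq : w.re ^ 2 + w.im ^ 2 = ‖lam‖ ^ 2 := by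
    have hw : ‖w‖ = ‖lam‖ := by rw [norm_mul, norm_exp_ofReal_mul_I, mul_one]
    rw [← hw, Complex.sq_norm, normSq_apply]; ring
  have hnorm : ‖(x : ℂ) + w‖ ^ 2 = (x + w.re) ^ 2 + w.im ^ 2 := by
    rw [Complex.sq_norm, normSq_apply]
    simp only [add_re, ofReal_re, add_im, ofReal_im, zero_add]
    ring
  rw [hnorm]
  nlinarith [mul_nonneg (sub_nonneg.2 (Real.cos_le_one (lam.arg + t))) (sq_nonneg (x - ‖lam‖))]

lemma neg_one_lt_cos_of_abs_lt_pi {φ : ℝ} (h : |φ| < π) : -1 < Real.cos φ := by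
  rw [← Real.cos_abs, ← Real.cos_pi]
  exact Real.cos_lt_cos_of_nonneg_of_le_pi (abs_nonneg φ) le_rfl h

lemma ofReal_add_mul_exp_ne_zero {lam : ℂ} (hlam : lam ≠ 0) {t : ℝ} (h : |lam.arg + t| < π)
    {x : ℝ} (hx : 0 ≤ x) : (x : ℂ) + lam * exp (t * I) ≠ 0 := by
  have hcos := neg_one_lt_cos_of_abs_lt_pi h
  have hlam' := norm_pos_iff.2 hlam
  have hpos : 0 < (1 + Real.cos (lam.arg + t)) / 2 * (x + ‖lam‖) ^ 2 :=
    mul_pos (by linarith) (pow_pos (by linarith) 2)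
  exact norm_ne_zero_iff.1 (sq_pos_iff.1 (hpos.trans_le (one_add_cos_mul_sq_le_norm_sq lam t hx)))

lemma exists_eventually_mul_pow_four_le {lam₀ : ℂ} (hlam₀ : lam₀ ∈ slitPlane) {t₁ t₂ : ℝ}
    (h₁ : |lam₀.arg + t₁| < π) (h₂ : |lam₀.arg + t₂| < π) :
    ∃ κ > 0, ∀ᶠ lam in 𝓝 lam₀, ∀ x : ℝ, 0 ≤ x →
      κ * (x + ‖lam‖) ^ 4 ≤ ‖((x : ℂ) + lam * exp (t₁ * I)) * (x + lam * exp (t₂ * I))‖ ^ 2 := by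
  set g : ℂ → ℝ := fun lam =>
    (1 + Real.cos (lam.arg + t₁)) / 2 * ((1 + Real.cos (lam.arg + t₂)) / 2)
  have hg : ContinuousAt g lam₀ := by
    have := continuousAt_arg hlam₀
    fun_prop
  have hg₀ : 0 < g lam₀ := by
    have := neg_one_lt_cos_of_abs_lt_pi h₁
    have := neg_one_lt_cos_of_abs_lt_pi h₂
    simp only [g]; apply mul_pos <;> linarith
  refine ⟨g lam₀ / 2, by positivity, ?_⟩
  filter_upwards [hg.eventually (lt_mem_nhds (half_lt_self hg₀))] with lam hlam x hx
  have hB (t : ℝ) : 0 ≤ (1 + Real.cos (lam.arg + t)) / 2 * (x + ‖lam‖) ^ 2 :=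
    mul_nonneg (by linarith [Real.neg_one_le_cos (lam.arg + t)]) (sq_nonneg _)
  rw [norm_mul, mul_pow]
  calc g lam₀ / 2 * (x + ‖lam‖) ^ 4 ≤ g lam * (x + ‖lam‖) ^ 4 := by gcongr
    _ = (1 + Real.cos (lam.arg + t₁)) / 2 * (x + ‖lam‖) ^ 2 *
          ((1 + Real.cos (lam.arg + t₂)) / 2 * (x + ‖lam‖) ^ 2) := by ring
    _ ≤ _ := mul_le_mul (one_add_cos_mul_sq_le_norm_sq lam t₁ hx)
          (one_add_cos_mul_sq_le_norm_sq lam t₂ hx) (hB t₂) (sq_nonneg _)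

end

def rationalKernel (E₁ E₂ : ℂ) (x : ℝ) (lam : ℂ) : ℂ :=
  x / ((x + lam * E₁) * (x + lam * E₂))

section rationalKernel

variable {E₁ E₂ : ℂ} {x : ℝ}

lemma rationalKernel_sub_rationalKernel {lam lam₀ : ℂ}
    (hP : ((x : ℂ) + lam * E₁) * (x + lam * E₂) ≠ 0)
    (hP₀ : ((x : ℂ) + lam₀ * E₁) * (x + lam₀ * E₂) ≠ 0) :
    rationalKernel E₁ E₂ x lam - rationalKernel E₁ E₂ x lam₀ =
      (lam₀ - lam) * x * (x * (E₁ + E₂) + (lam + lam₀) * (E₁ * E₂)) /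
        (((x : ℂ) + lam * E₁) * (x + lam * E₂) * ((x + lam₀ * E₁) * (x + lam₀ * E₂))) := by
  rw [rationalKernel, rationalKernel, div_sub_div _ _ hP hP₀]
  ring

lemma hasDerivAt_rationalKernel {lam : ℂ} (hP : ((x : ℂ) + lam * E₁) * (x + lam * E₂) ≠ 0) :
    HasDerivAt (rationalKernel E₁ E₂ x)
      (-(rationalKernel E₁ E₂ x lam *
        ((E₁ * (x + lam * E₂) + (x + lam * E₁) * E₂) / ((x + lam * E₁) * (x + lam * E₂)))))
      lam := by
  have h₁ := ((hasDerivAt_id lam).mul_const E₁).const_add (x : ℂ)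
  have h₂ := ((hasDerivAt_id lam).mul_const E₂).const_add (x : ℂ)
  refine ((hasDerivAt_const lam (x : ℂ)).fun_div (h₁.fun_mul h₂) hP).congr_deriv ?_
  simp only [rationalKernel, id]
  field_simp
  ring

lemma norm_ofReal_add_mul_le {E : ℂ} (hE : ‖E‖ = 1) (hx : 0 ≤ x) (lam : ℂ) :
    ‖(x : ℂ) + lam * E‖ ≤ x + ‖lam‖ := by
  simpa [norm_mul, hE, abs_of_nonneg hx] using norm_add_le (x : ℂ) (lam * E)

lemma div_sq_le_norm_rationalKernel (hE₁ : ‖E₁‖ = 1) (hE₂ : ‖E₂‖ = 1) (hx : 0 ≤ x) {lam : ℂ}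
    (hP : ((x : ℂ) + lam * E₁) * (x + lam * E₂) ≠ 0) :
    x / (x + ‖lam‖) ^ 2 ≤ ‖rationalKernel E₁ E₂ x lam‖ := by
  rw [rationalKernel, norm_div, Complex.norm_real, Real.norm_of_nonneg hx, norm_mul, sq]
  exact div_le_div_of_nonneg_left hx (by rw [← norm_mul]; exact norm_pos_iff.2 hP)
    (mul_le_mul (norm_ofReal_add_mul_le hE₁ hx lam) (norm_ofReal_add_mul_le hE₂ hx lam)
      (norm_nonneg _) (by positivity))

lemma norm_rationalKernel_mul_le (hE₁ : ‖E₁‖ = 1) (hE₂ : ‖E₂‖ = 1) (hx : 0 ≤ x)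
    {lam lam₀ : ℂ} {κ : ℝ} (hκ : 0 < κ)
    (hP : κ * (x + ‖lam‖) ^ 4 ≤ ‖((x : ℂ) + lam * E₁) * (x + lam * E₂)‖ ^ 2)
    (hlam : ‖lam₀‖ ≤ 2 * ‖lam‖) (hlam₀ : lam₀ ≠ 0)
    (hP₀ : ((x : ℂ) + lam₀ * E₁) * (x + lam₀ * E₂) ≠ 0) :
    ‖rationalKernel E₁ E₂ x lam *
        ((E₁ * (x + lam * E₂) + (x + lam * E₁) * E₂) / ((x + lam * E₁) * (x + lam * E₂)))‖ ≤
      16 / (κ * ‖lam₀‖) * ‖rationalKernel E₁ E₂ x lam₀‖ := by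
  set P := ((x : ℂ) + lam * E₁) * (x + lam * E₂)
  set P' := E₁ * (x + lam * E₂) + (x + lam * E₁) * E₂
  set r := ‖lam‖
  set r₀ := ‖lam₀‖
  have hr₀ : 0 < r₀ := norm_pos_iff.2 hlam₀
  have hy : 0 < x + r := by linarith
  have hP' : ‖P'‖ ≤ 2 * (x + r) := by
    calc ‖P'‖ ≤ ‖E₁ * (x + lam * E₂)‖ + ‖(x + lam * E₁) * E₂‖ := norm_add_le _ _
      _ ≤ (x + r) + (x + r) := by
          rw [norm_mul, norm_mul, hE₁, hE₂, one_mul, mul_one]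
          exact add_le_add (norm_ofReal_add_mul_le hE₂ hx lam) (norm_ofReal_add_mul_le hE₁ hx lam)
      _ = 2 * (x + r) := by ring
  calc ‖rationalKernel E₁ E₂ x lam * (P' / P)‖ = x * ‖P'‖ / ‖P‖ ^ 2 := by
        rw [rationalKernel, norm_mul, norm_div, norm_div, Complex.norm_real,
          Real.norm_of_nonneg hx]
        ring
    _ ≤ x * (2 * (x + r)) / (κ * (x + r) ^ 4) := by gcongr
    _ = 2 / (κ * (x + r)) * (x / (x + r) ^ 2) := by field_simp
    _ ≤ 4 / (κ * r₀) * (4 * (x / (x + r₀) ^ 2)) := by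
        apply mul_le_mul _ _ (by positivity) (by positivity)
        · rw [div_le_div_iff₀ (by positivity) (by positivity)]
          nlinarith
        · have h := pow_le_pow_left₀ (by positivity) (show x + r₀ ≤ 2 * (x + r) by linarith) 2
          rw [mul_div_assoc', div_le_div_iff₀ (by positivity) (by positivity)]
          nlinarith [mul_le_mul_of_nonneg_left h hx]
    _ ≤ 16 / (κ * r₀) * ‖rationalKernel E₁ E₂ x lam₀‖ := by
        rw [← mul_assoc, show 4 / (κ * r₀) * 4 = 16 / (κ * r₀) by ring]
        gcongr
        exact div_sq_le_norm_rationalKernel hE₁ hE₂ hx hP₀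

end rationalKernel

theorem differentiableAt_integral_rationalKernel_smul {α F : Type*} [MeasurableSpace α]
    {μ : Measure α} [NormedAddCommGroup F] [NormedSpace ℂ F] {E₁ E₂ : ℂ}
    (hE₁ : ‖E₁‖ = 1) (hE₂ : ‖E₂‖ = 1) {φ : α → ℝ} (hφ : Measurable φ)
    (hφ₀ : ∀ᵐ a ∂μ, 0 ≤ φ a) {G : α → F} {lam₀ : ℂ} (hlam₀ : lam₀ ≠ 0)
    (hlow : ∃ κ > 0, ∀ᶠ lam in 𝓝 lam₀, ∀ x : ℝ, 0 ≤ x →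
      κ * (x + ‖lam‖) ^ 4 ≤ ‖((x : ℂ) + lam * E₁) * (x + lam * E₂)‖ ^ 2)
    (hint : ∀ᶠ lam in 𝓝 lam₀, Integrable (fun a => rationalKernel E₁ E₂ (φ a) lam • G a) μ) :
    DifferentiableAt ℂ (fun lam => ∫ a, rationalKernel E₁ E₂ (φ a) lam • G a ∂μ) lam₀ := by
  obtain ⟨κ, hκ, hlow⟩ := hlow
  have hnorm : ∀ᶠ lam in 𝓝 lam₀, ‖lam₀‖ / 2 < ‖lam‖ :=
    (continuous_norm.tendsto lam₀).eventually (lt_mem_nhds (half_lt_self (norm_pos_iff.2 hlam₀)))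
  obtain ⟨ε, hε, hball⟩ := Metric.eventually_nhds_iff_ball.1 (hlow.and hnorm)
  have hP {lam : ℂ} (hlam : lam ∈ Metric.ball lam₀ ε) {x : ℝ} (hx : 0 ≤ x) :
      ((x : ℂ) + lam * E₁) * (x + lam * E₂) ≠ 0 := by
    obtain ⟨hκlam, hlam⟩ := hball lam hlam
    have : 0 < ‖lam‖ := lt_of_le_of_lt (by positivity) hlam
    have hpos : 0 < κ * (x + ‖lam‖) ^ 4 := by positivity
    exact norm_ne_zero_iff.1 (sq_pos_iff.1 (hpos.trans_le (hκlam x hx)))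
  set F' : ℂ → α → F := fun lam a =>
    (-(rationalKernel E₁ E₂ (φ a) lam *
      ((E₁ * (φ a + lam * E₂) + (φ a + lam * E₁) * E₂) /
        ((φ a + lam * E₁) * (φ a + lam * E₂))))) • G a
  have hF'_meas : AEStronglyMeasurable (F' lam₀) μ := by
    have hq : Measurable fun a => -((E₁ * (φ a + lam₀ * E₂) + (φ a + lam₀ * E₁) * E₂) /
        ((φ a + lam₀ * E₁) * (φ a + lam₀ * E₂))) := by fun_prop
    refine (hq.aestronglyMeasurable.smul hint.self_of_nhds.aestronglyMeasurable).congr ?_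
    filter_upwards with a
    rw [Pi.smul_apply', smul_smul, neg_mul, mul_comm]
  have hbound : ∀ᵐ a ∂μ, ∀ lam ∈ Metric.ball lam₀ ε,
      ‖F' lam a‖ ≤ 16 / (κ * ‖lam₀‖) * ‖rationalKernel E₁ E₂ (φ a) lam₀ • G a‖ := by
    filter_upwards [hφ₀] with a ha lam hlam
    rw [norm_smul, norm_smul, norm_neg, ← mul_assoc]
    exact mul_le_mul_of_nonneg_right (norm_rationalKernel_mul_le hE₁ hE₂ ha hκ
      ((hball lam hlam).1 _ ha) (by linarith [(hball lam hlam).2]) hlam₀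
      (hP (Metric.mem_ball_self hε) ha)) (norm_nonneg _)
  have hdiff : ∀ᵐ a ∂μ, ∀ lam ∈ Metric.ball lam₀ ε,
      HasDerivAt (fun lam => rationalKernel E₁ E₂ (φ a) lam • G a) (F' lam a) lam := by
    filter_upwards [hφ₀] with a ha lam hlam
    exact (hasDerivAt_rationalKernel (hP hlam ha)).smul_const (G a)
  exact (hasDerivAt_integral_of_dominated_loc_of_deriv_le (Metric.ball_mem_nhds lam₀ hε)
    (hint.mono fun _ h => h.aestronglyMeasurable) hint.self_of_nhds hF'_meas hbound
    (hint.self_of_nhds.norm.const_mul _) hdiff).2.differentiableAt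

lemma mem_slitPlane_of_abs_arg_lt {z : ℂ} (hz : z ≠ 0) {α : ℝ} (hα : α ≤ π) (h : |z.arg| < α) :
    z ∈ Complex.slitPlane :=
  Complex.mem_slitPlane_iff_arg.2
    ⟨fun h' => by rw [h', abs_of_pos Real.pi_pos] at h; linarith, hz⟩

lemma isOpen_setOf_ne_zero_abs_arg_lt {α : ℝ} (hα : α ≤ π) :
    IsOpen {z : ℂ | z ≠ 0 ∧ |z.arg| < α} := by
  have : {z : ℂ | z ≠ 0 ∧ |z.arg| < α} = Complex.slitPlane ∩ (fun z => |z.arg|) ⁻¹' Iio α := by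
    ext z
    exact ⟨fun ⟨hz, h⟩ => ⟨mem_slitPlane_of_abs_arg_lt hz hα h, h⟩,
      fun ⟨hz, h⟩ => ⟨Complex.slitPlane_ne_zero hz, h⟩⟩
  rw [this]
  exact ContinuousOn.isOpen_inter_preimage
    (fun z hz => (Complex.continuousAt_arg hz).abs.continuousWithinAt)
    Complex.isOpen_slitPlane isOpen_Iio

section Sector

variable {σ : ℝ}

lemma abs_arg_add_lt_pi {z : ℂ} (hσ : 0 ≤ σ) (h : |z.arg| < π * (1 - σ)) :
    |z.arg + π * σ| < π ∧ |z.arg + -(π * σ)| < π := by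
  have := Real.pi_pos
  have := abs_lt.1 h
  constructor <;> rw [abs_lt] <;> constructor <;> nlinarith

lemma IsigKer_eq_rationalKernel (lam : ℂ) (s : ℝ) :
    IsigKer σ lam s = rationalKernel (Complex.exp (↑(π * σ) * Complex.I))
      (Complex.exp (↑(-(π * σ)) * Complex.I)) (s ^ σ) lam := by
  simp only [IsigKer, rationalKernel, Complex.ofReal_mul, Complex.ofReal_neg]

lemma ofReal_add_mul_exp_mul_ne_zero (hσ : 0 ≤ σ) {lam : ℂ} (hlam : lam ≠ 0)
    (harg : |lam.arg| < π * (1 - σ)) {x : ℝ} (hx : 0 ≤ x) :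
    ((x : ℂ) + lam * Complex.exp (↑(π * σ) * Complex.I)) *
      (x + lam * Complex.exp (↑(-(π * σ)) * Complex.I)) ≠ 0 :=
  mul_ne_zero (ofReal_add_mul_exp_ne_zero hlam (abs_arg_add_lt_pi hσ harg).1 hx)
    (ofReal_add_mul_exp_ne_zero hlam (abs_arg_add_lt_pi hσ harg).2 hx)

lemma ThetaKer_eq_sub (hσ : 0 ≤ σ) {lam lam0 : ℂ} (hlam : lam ≠ 0)
    (harg : |lam.arg| < π * (1 - σ)) (hlam0 : lam0 ≠ 0) (harg0 : |lam0.arg| < π * (1 - σ))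
    {s : ℝ} (hs : 0 < s) :
    ThetaKer σ lam lam0 s = IsigKer σ lam s - IsigKer σ lam0 s := by
  have hx := (Real.rpow_pos_of_pos hs σ).le
  have hsum : Complex.exp (↑(π * σ) * Complex.I) + Complex.exp (↑(-(π * σ)) * Complex.I) =
      2 * (Real.cos (π * σ) : ℂ) := by
    rw [Complex.ofReal_cos, Complex.two_cos, Complex.ofReal_neg, neg_mul]
  have hprod : Complex.exp (↑(π * σ) * Complex.I) * Complex.exp (↑(-(π * σ)) * Complex.I) = 1 := by
    rw [← Complex.exp_add, Complex.ofReal_neg, neg_mul, add_neg_cancel, Complex.exp_zero]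
  rw [IsigKer_eq_rationalKernel, IsigKer_eq_rationalKernel,
    rationalKernel_sub_rationalKernel (ofReal_add_mul_exp_mul_ne_zero hσ hlam harg hx)
      (ofReal_add_mul_exp_mul_ne_zero hσ hlam0 harg0 hx), hsum, hprod, ThetaKer]
  simp only [Complex.ofReal_mul, Complex.ofReal_neg]
  ring

end Sector

lemma differentiableAt_Isig {F : Type*} [NormedAddCommGroup F] [NormedSpace ℂ F] {σ : ℝ}
    (hσ : 0 ≤ σ) {R : ℂ → F →L[ℂ] F} {lam₀ : ℂ}
    (hlam₀ : lam₀ ≠ 0) (harg : |lam₀.arg| < π * (1 - σ))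
    (hint : ∀ᶠ lam in 𝓝 lam₀, IntegrableOn (fun s : ℝ => IsigKer σ lam s • R s) (Ioi 0)) :
    DifferentiableAt ℂ (Isig R σ) lam₀ := by
  have hα : π * (1 - σ) ≤ π := by nlinarith [Real.pi_pos]
  unfold Isig
  simp only [IsigKer_eq_rationalKernel] at hint ⊢
  exact DifferentiableAt.fun_const_smul (differentiableAt_integral_rationalKernel_smul
    (Complex.norm_exp_ofReal_mul_I _)
    (Complex.norm_exp_ofReal_mul_I _) (measurable_id.pow_const σ)
    ((ae_restrict_mem measurableSet_Ioi).mono fun s hs => Real.rpow_nonneg (le_of_lt hs) σ)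
    hlam₀ (exists_eventually_mul_pow_four_le (mem_slitPlane_of_abs_arg_lt hlam₀ hα harg)
      (abs_arg_add_lt_pi hσ harg).1 (abs_arg_add_lt_pi hσ harg).2) hint) _

theorem statement5_general
    {X : Type u} [NormedAddCommGroup X] [NormedSpace ℂ X] [CompleteSpace X]
    (σ : ℝ) (hσ0 : 0 < σ)
    (R : ℂ → X →L[ℂ] X)
    -- the integrals converge absolutely in L(X₀):
    (hint : ∀ lam : ℂ, lam ≠ 0 → |lam.arg| < Real.pi * (1 - σ) →
      IntegrableOn (fun s : ℝ => IsigKer σ lam s • R (s : ℂ)) (Ioi 0)) :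
    (∀ lam : ℂ, lam ≠ 0 → |lam.arg| < Real.pi * (1 - σ) →
      AnalyticAt ℂ (Isig R σ) lam) ∧
    (∀ lam lam0 : ℂ, lam ≠ 0 → |lam.arg| < Real.pi * (1 - σ) →
      lam0 ≠ 0 → |lam0.arg| < Real.pi * (1 - σ) →
      Isig R σ lam - Isig R σ lam0 =
        (((Real.sin (Real.pi * σ) / σ : ℝ)) : ℂ) •
          ∫ s in Ioi (0 : ℝ), ThetaKer σ lam lam0 s • R (s : ℂ)) := by
  have hsector : ∀ lam : ℂ, lam ≠ 0 → |lam.arg| < π * (1 - σ) →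
      {z : ℂ | z ≠ 0 ∧ |z.arg| < π * (1 - σ)} ∈ 𝓝 lam := fun lam h0 harg =>
    (isOpen_setOf_ne_zero_abs_arg_lt (by nlinarith [Real.pi_pos])).mem_nhds ⟨h0, harg⟩
  have hdiff : ∀ lam : ℂ, lam ≠ 0 → |lam.arg| < π * (1 - σ) →
      DifferentiableAt ℂ (Isig R σ) lam := fun lam h0 harg =>
    differentiableAt_Isig hσ0.le h0 harg
      (Filter.eventually_of_mem (hsector lam h0 harg) fun z hz => hint z hz.1 hz.2)
  refine ⟨fun lam h0 harg => Complex.analyticAt_iff_eventually_differentiableAt.2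
    (Filter.eventually_of_mem (hsector lam h0 harg) fun z hz => hdiff z hz.1 hz.2), ?_⟩
  intro lam lam0 h0 harg h0' harg'
  rw [Isig, Isig, ← smul_sub, ← integral_sub (hint lam h0 harg) (hint lam0 h0' harg')]
  congr 1
  refine setIntegral_congr_fun measurableSet_Ioi fun s hs => ?_
  rw [← sub_smul, ThetaKer_eq_sub hσ0.le h0 harg h0' harg' hs]

/-- Let `A` be a (possibly non-invertible) sectorial operator of
angle `θ ∈ (0,π)` and `σ ∈ (0,1)`.  Then `λ ↦ I_σ(λ)` is analytic on the open
sector `S°_{π(1-σ)}`, and for `λ, λ₀` in this open sector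
`I_σ(λ) - I_σ(λ₀) = (sin(πσ)/σ) ∫₀^∞ Θ(λ,λ₀,s)(A+s)⁻¹ ds`. -/
theorem statement5
    {X : Type u} [NormedAddCommGroup X] [NormedSpace ℂ X] [CompleteSpace X]
    (θ σ K : ℝ) (hθ0 : 0 < θ) (hθπ : θ < Real.pi) (hσ0 : 0 < σ) (hσ1 : σ < 1)
    (hK : 1 ≤ K)
    (A : X →ₗ.[ℂ] X)
    (hclosed : IsClosed (A.graph : Set (X × X)))
    (hdense : Dense (A.domain : Set X))
    (hinj : ∀ u : A.domain, A u = 0 → (u : X) = 0)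
    (R : ℂ → X →L[ℂ] X)
    (hA : ∀ lam ∈ Sector θ, lam ≠ 0 →
      IsResolventAt A lam (R lam) ∧ ‖lam‖ * ‖R lam‖ ≤ K)
    -- the integrals converge absolutely in L(X₀):
    (hint : ∀ lam : ℂ, lam ≠ 0 → |lam.arg| < Real.pi * (1 - σ) →
      IntegrableOn (fun s : ℝ => IsigKer σ lam s • R (s : ℂ)) (Ioi 0))
    (hintΘ : ∀ lam lam0 : ℂ, lam ≠ 0 → |lam.arg| < Real.pi * (1 - σ) →
      lam0 ≠ 0 → |lam0.arg| < Real.pi * (1 - σ) →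
      IntegrableOn (fun s : ℝ => ThetaKer σ lam lam0 s • R (s : ℂ)) (Ioi 0)) :
    (∀ lam : ℂ, lam ≠ 0 → |lam.arg| < Real.pi * (1 - σ) →
      AnalyticAt ℂ (Isig R σ) lam) ∧
    (∀ lam lam0 : ℂ, lam ≠ 0 → |lam.arg| < Real.pi * (1 - σ) →
      lam0 ≠ 0 → |lam0.arg| < Real.pi * (1 - σ) →
      Isig R σ lam - Isig R σ lam0 =
        (((Real.sin (Real.pi * σ) / σ : ℝ)) : ℂ) •
          ∫ s in Ioi (0 : ℝ), ThetaKer σ lam lam0 s • R (s : ℂ)) :=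
  statement5_general σ hσ0 R hint
end
end

section
/- Let X be a Banach space, A a closed linear operator in X, and κ_ρ (ρ > 0) a group of isometries of X that leaves D(A) invariant and satisfies the dilation relation λ − A = ρ² κ_ρ ((λ/ρ²) − A) κ_ρ⁻¹ for all λ ∈ ℂ and ρ > 0. If the spectrum of A is contained in ℂ\S°_φ for some φ ∈ (0,π), then −A is sectorial of angle θ for every θ ∈ [0,φ): indeed |λ|(λ−A)⁻¹ = κ_{√|λ|} ((λ/|λ|)−A)⁻¹ κ_{√|λ|}⁻¹ for λ ∈ S_θ\{0}, so that |λ|‖(λ−A)⁻¹‖ ≤ sup_{|μ|=1, μ∈S_θ} ‖(μ−A)⁻¹‖ < ∞. -/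
/-!
Conjugating by `κ_ρ` with `ρ = √|λ|` turns `λ - A` into `|λ| (λ/|λ| - A)`, so the resolvent at `λ`
is `|λ|⁻¹` times an isometric conjugate of the resolvent at the unit-modulus point `λ/|λ|`, which has
the same norm. The resolvent norms on the compact arc `S_θ ∩ {|μ| = 1}` are bounded, because a
resolvent at `μ` controls, up to a factor `2`, the resolvents on a ball around `μ`.
-/

open MeasureTheory Set
open scoped Real Topology

noncomputable section

universe u

variable {X : Type u} [NormedAddCommGroup X] [NormedSpace ℂ X]

/-- `R` is the resolvent `(lam - A)⁻¹` of `A`: a two-sided inverse of `lam - A`. -/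
def IsResolventAt' (A : X →ₗ.[ℂ] X) (lam : ℂ) (R : X →L[ℂ] X) : Prop :=
  (∀ x : X, ∃ h : R x ∈ A.domain, lam • R x - A ⟨R x, h⟩ = x) ∧
  (∀ u : A.domain, R (lam • (u : X) - A u) = (u : X))

theorem LinearIsometryEquiv.norm_conjContinuousAlgEquiv_le (e : X ≃ₗᵢ[ℂ] X) (R : X →L[ℂ] X) :
    ‖e.toContinuousLinearEquiv.conjContinuousAlgEquiv R‖ ≤ ‖R‖ :=
  ContinuousLinearMap.opNorm_le_bound _ (norm_nonneg R) fun x => by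
    simpa using R.le_opNorm (e.symm x)

namespace IsResolventAt'

variable {A : X →ₗ.[ℂ] X}

theorem unique {lam : ℂ} {R R' : X →L[ℂ] X} (hR : IsResolventAt' A lam R)
    (hR' : IsResolventAt' A lam R') : R = R' := by
  ext x
  obtain ⟨hx, hR'x⟩ := hR'.1 x
  calc R x = R (lam • R' x - A ⟨R' x, hx⟩) := by rw [hR'x]
    _ = R' x := hR.2 ⟨R' x, hx⟩

theorem norm_le_two_mul {μ lam : ℂ} {R R' : X →L[ℂ] X} (hR : IsResolventAt' A μ R)
    (hR' : IsResolventAt' A lam R') (h : ‖lam - μ‖ * ‖R‖ ≤ 1 / 2) : ‖R'‖ ≤ 2 * ‖R‖ := by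
  refine R'.opNorm_le_bound (by positivity) fun x => ?_
  obtain ⟨hx, hR'x⟩ := hR'.1 x
  have hshift : R' x = R (x + (μ - lam) • R' x) := by
    have hx_eq : x + (μ - lam) • R' x = μ • R' x - A ⟨R' x, hx⟩ :=
      calc x + (μ - lam) • R' x = (lam • R' x - A ⟨R' x, hx⟩) + (μ - lam) • R' x := by rw [hR'x]
        _ = μ • R' x - A ⟨R' x, hx⟩ := by rw [sub_smul]; abel
    rw [hx_eq, hR.2 ⟨R' x, hx⟩]
  have hb : ‖R' x‖ ≤ ‖R‖ * (‖x‖ + ‖lam - μ‖ * ‖R' x‖) :=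
    calc ‖R' x‖ ≤ ‖R‖ * ‖x + (μ - lam) • R' x‖ :=
          (congrArg norm hshift).trans_le (R.le_opNorm _)
      _ ≤ ‖R‖ * (‖x‖ + ‖lam - μ‖ * ‖R' x‖) := by
        gcongr
        rw [norm_sub_rev, ← norm_smul]
        exact norm_add_le _ _
  nlinarith [norm_nonneg (R' x), norm_nonneg x, norm_nonneg R,
    mul_le_mul_of_nonneg_right h (norm_nonneg (R' x))]

theorem conj_of_dilation {e : X ≃L[ℂ] X} {c lam : ℂ} {R : X →L[ℂ] X} (hc : c ≠ 0)
    (hdom : ∀ u : X, u ∈ A.domain ↔ e u ∈ A.domain)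
    (hrel : ∀ (u : X) (hu : u ∈ A.domain) (hu' : e.symm u ∈ A.domain),
      lam • u - A ⟨u, hu⟩ = c • e ((lam / c) • e.symm u - A ⟨e.symm u, hu'⟩))
    (hR : IsResolventAt' A (lam / c) R) :
    IsResolventAt' A lam (c⁻¹ • e.conjContinuousAlgEquiv R) := by
  constructor
  · intro x
    obtain ⟨hy, hyx⟩ := hR.1 (e.symm x)
    set y := R (e.symm x)
    have hey : e y ∈ A.domain := (hdom y).mp hy
    have hrel_y : lam • e y - A ⟨e y, hey⟩ = c • x := by
      have := hrel (e y) hey (by simpa using hy)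
      simp only [ContinuousLinearEquiv.symm_apply_apply] at this
      rw [this, hyx, ContinuousLinearEquiv.apply_symm_apply]
    refine ⟨A.domain.smul_mem c⁻¹ hey, ?_⟩
    have hA : A ⟨c⁻¹ • e y, A.domain.smul_mem c⁻¹ hey⟩ = c⁻¹ • A ⟨e y, hey⟩ :=
      A.map_smul c⁻¹ ⟨e y, hey⟩
    simp only [FunLike.coe_smul, Pi.smul_apply,
      ContinuousLinearEquiv.conjContinuousAlgEquiv_apply_apply]
    rw [hA, smul_comm lam c⁻¹, ← smul_sub, hrel_y, inv_smul_smul₀ hc]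
  · intro u
    have hu' : e.symm u ∈ A.domain := (hdom _).mpr (by simp)
    rw [show A u = A ⟨u, u.2⟩ from rfl, hrel u u.2 hu']
    simp only [FunLike.coe_smul, Pi.smul_apply,
      ContinuousLinearEquiv.conjContinuousAlgEquiv_apply_apply, map_smul,
      ContinuousLinearEquiv.symm_apply_apply, hR.2 ⟨e.symm u, hu'⟩,
      ContinuousLinearEquiv.apply_symm_apply, smul_inv_smul₀ hc]

theorem of_div_norm {κ : ℝ → (X ≃ₗᵢ[ℂ] X)}
    (hκdom : ∀ ρ : ℝ, 0 < ρ → ∀ u : X, u ∈ A.domain ↔ (κ ρ) u ∈ A.domain)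
    (hrel : ∀ (ρ : ℝ), 0 < ρ → ∀ (lam : ℂ) (u : X) (hu : u ∈ A.domain)
        (hu' : (κ ρ).symm u ∈ A.domain),
        lam • u - A ⟨u, hu⟩ =
          ((ρ : ℂ) ^ 2) • (κ ρ)
            ((lam / (ρ : ℂ) ^ 2) • ((κ ρ).symm u) - A ⟨(κ ρ).symm u, hu'⟩))
    {lam : ℂ} (hlam : lam ≠ 0) {R : X →L[ℂ] X} (hR : IsResolventAt' A (lam / ‖lam‖) R) :
    IsResolventAt' A lam
      ((‖lam‖ : ℂ)⁻¹ • (κ √‖lam‖).toContinuousLinearEquiv.conjContinuousAlgEquiv R) := by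
  have hρ : 0 < √‖lam‖ := Real.sqrt_pos.mpr (norm_pos_iff.mpr hlam)
  have hsq : ((√‖lam‖ : ℝ) : ℂ) ^ 2 = ‖lam‖ := by
    rw [← Complex.ofReal_pow, Real.sq_sqrt (norm_nonneg lam)]
  refine conj_of_dilation (by simpa using hlam) (hκdom _ hρ) (fun u hu hu' => ?_) hR
  rw [← hsq]
  exact hrel _ hρ lam u hu hu'

end IsResolventAt'

theorem bddAbove_norm_resolvent_of_isCompact {A : X →ₗ.[ℂ] X} {K : Set ℂ} (hK : IsCompact K)
    (hres : ∀ μ ∈ K, ∃ R, IsResolventAt' A μ R) :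
    BddAbove {r : ℝ | ∃ (μ : ℂ) (R : X →L[ℂ] X), μ ∈ K ∧ IsResolventAt' A μ R ∧ r = ‖R‖} := by
  choose! R hR using hres
  obtain ⟨t, hcover⟩ := hK.elim_nhds_subcover' (fun μ _ => Metric.ball μ (2 * (‖R μ‖ + 1))⁻¹)
    fun μ _ => Metric.ball_mem_nhds μ (by positivity)
  obtain ⟨M, hM⟩ := (t.image fun ν : K => 2 * ‖R ν‖).bddAbove
  refine ⟨M, ?_⟩
  rintro _ ⟨μ, R', hμ, hR', rfl⟩
  obtain ⟨ν, hν, hμν⟩ := mem_iUnion₂.mp (hcover hμ)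
  have hclose : ‖μ - ν‖ * ‖R ν‖ ≤ 1 / 2 := by
    have hpos : 0 < 2 * (‖R ν‖ + 1) := by positivity
    have hlt := mul_lt_mul_of_pos_right (mem_ball_iff_norm.mp hμν) hpos
    rw [inv_mul_cancel₀ hpos.ne'] at hlt
    nlinarith [norm_nonneg (μ - ν)]
  exact ((hR ν ν.2).norm_le_two_mul hR' hclose).trans (hM (Finset.mem_image_of_mem _ hν))

theorem Complex.arg_div_norm (z : ℂ) : (z / ‖z‖).arg = z.arg := by
  rcases eq_or_ne z 0 with rfl | hz
  · simp
  rw [div_eq_inv_mul, ← Complex.ofReal_inv]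
  exact Complex.arg_real_mul z (inv_pos.mpr (norm_pos_iff.mpr hz))

theorem div_norm_mem_sector {θ : ℝ} {z : ℂ} (hz : z ∈ Sector θ) : z / ‖z‖ ∈ Sector θ := by
  simpa [Sector, Complex.arg_div_norm] using hz

theorem sector_eq_setOf_norm_mul_cos_le {θ : ℝ} (hθ0 : 0 ≤ θ) (hθπ : θ ≤ π) :
    Sector θ = {z : ℂ | ‖z‖ * Real.cos θ ≤ z.re} := by
  ext z
  rcases eq_or_ne z 0 with rfl | hz
  · simp [Sector, hθ0]
  have hcos : Real.cos θ ≤ Real.cos |z.arg| ↔ |z.arg| ≤ θ :=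
    Real.strictAntiOn_cos.le_iff_ge ⟨hθ0, hθπ⟩ ⟨abs_nonneg _, Complex.abs_arg_le_pi z⟩
  rw [mem_ofPred_eq, ← Complex.norm_mul_cos_arg, ← Real.cos_abs z.arg,
    mul_le_mul_iff_right₀ (norm_pos_iff.mpr hz), hcos]
  rfl

theorem isClosed_sector (θ : ℝ) : IsClosed (Sector θ) := by
  rcases lt_or_ge θ 0 with hθ0 | hθ0
  · convert isClosed_empty
    exact eq_empty_of_forall_notMem fun z hz => (hθ0.trans_le (abs_nonneg _)).not_ge hz
  rcases le_or_gt θ π with hθπ | hθπ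
  · rw [sector_eq_setOf_norm_mul_cos_le hθ0 hθπ]
    exact isClosed_le (by fun_prop) Complex.continuous_re
  · convert isClosed_univ
    exact eq_univ_of_forall fun z => (Complex.abs_arg_le_pi z).trans hθπ.le

theorem statement11_general
    {X : Type u} [NormedAddCommGroup X] [NormedSpace ℂ X]
    (A : X →ₗ.[ℂ] X)
    (κ : ℝ → (X ≃ₗᵢ[ℂ] X))
    -- κ_ρ leaves D(A) invariant:
    (hκdom : ∀ ρ : ℝ, 0 < ρ → ∀ u : X, u ∈ A.domain ↔ (κ ρ) u ∈ A.domain)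
    -- the dilation relation λ - A = ρ² κ_ρ ((λ/ρ²) - A) κ_ρ⁻¹:
    (hrel : ∀ (ρ : ℝ), 0 < ρ → ∀ (lam : ℂ) (u : X) (hu : u ∈ A.domain)
        (hu' : (κ ρ).symm u ∈ A.domain),
        lam • u - A ⟨u, hu⟩ =
          ((ρ : ℂ) ^ 2) • (κ ρ)
            ((lam / (ρ : ℂ) ^ 2) • ((κ ρ).symm u) - A ⟨(κ ρ).symm u, hu'⟩))
    (φ : ℝ)
    -- the spectrum of A is contained in ℂ\S°_φ:
    (hspec : ∀ lam : ℂ, lam ≠ 0 → |lam.arg| < φ →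
      ∃ Rl : X →L[ℂ] X, IsResolventAt' A lam Rl) :
    ∀ θ : ℝ, 0 ≤ θ → θ < φ →
      ∃ Rfam : ℂ → X →L[ℂ] X,
        -- -A is sectorial of angle θ:
        (∀ lam ∈ Sector θ, lam ≠ 0 → IsResolventAt' A lam (Rfam lam)) ∧
        -- the conjugation identity |λ|(λ-A)⁻¹ = κ_{√|λ|}((λ/|λ|)-A)⁻¹κ_{√|λ|}⁻¹:
        (∀ lam ∈ Sector θ, lam ≠ 0 → ∀ R1 : X →L[ℂ] X,
          IsResolventAt' A (lam / (‖lam‖ : ℂ)) R1 → ∀ x : X,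
            (‖lam‖ : ℂ) • Rfam lam x =
              (κ (Real.sqrt ‖lam‖)) (R1 ((κ (Real.sqrt ‖lam‖)).symm x))) ∧
        -- the uniform bound:
        BddAbove {r : ℝ | ∃ (μ : ℂ) (R1 : X →L[ℂ] X),
            μ ∈ Sector θ ∧ ‖μ‖ = 1 ∧ IsResolventAt' A μ R1 ∧ r = ‖R1‖} ∧
        (∀ lam ∈ Sector θ, lam ≠ 0 →
          ‖lam‖ * ‖Rfam lam‖ ≤ sSup {r : ℝ | ∃ (μ : ℂ) (R1 : X →L[ℂ] X),
            μ ∈ Sector θ ∧ ‖μ‖ = 1 ∧ IsResolventAt' A μ R1 ∧ r = ‖R1‖}) := by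
  intro θ _ hθφ
  choose! R hR using hspec
  have hRsec : ∀ μ ∈ Sector θ, μ ≠ 0 → IsResolventAt' A μ (R μ) :=
    fun μ hμ hμ0 => hR μ hμ0 (lt_of_le_of_lt hμ hθφ)
  have hunit : ∀ lam ∈ Sector θ, lam ≠ 0 → IsResolventAt' A (lam / ‖lam‖) (R (lam / ‖lam‖)) :=
    fun lam hlam hlam0 => hRsec _ (div_norm_mem_sector hlam) (by simpa using hlam0)
  have hbdd : BddAbove {r : ℝ | ∃ (μ : ℂ) (R1 : X →L[ℂ] X),
      μ ∈ Sector θ ∧ ‖μ‖ = 1 ∧ IsResolventAt' A μ R1 ∧ r = ‖R1‖} := by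
    have := bddAbove_norm_resolvent_of_isCompact (A := A)
      ((isCompact_sphere (0 : ℂ) 1).inter_left (isClosed_sector θ))
      fun μ hμ => ⟨R μ, hRsec μ hμ.1 (ne_zero_of_mem_unit_sphere ⟨μ, hμ.2⟩)⟩
    simpa only [mem_inter_iff, mem_sphere_zero_iff_norm, and_assoc] using this
  refine ⟨fun lam => (‖lam‖ : ℂ)⁻¹ •
      (κ √‖lam‖).toContinuousLinearEquiv.conjContinuousAlgEquiv (R (lam / ‖lam‖)),
    fun lam hlam hlam0 => .of_div_norm hκdom hrel hlam0 (hunit lam hlam hlam0), ?_, hbdd, ?_⟩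
  · intro lam hlam hlam0 R1 hR1 x
    rw [hR1.unique (hunit lam hlam hlam0)]
    simp [hlam0]
  · intro lam hlam hlam0
    calc ‖lam‖ * ‖(‖lam‖ : ℂ)⁻¹ •
            (κ √‖lam‖).toContinuousLinearEquiv.conjContinuousAlgEquiv (R (lam / ‖lam‖))‖
        ≤ ‖R (lam / ‖lam‖)‖ := by
          rw [norm_smul, norm_inv, Complex.norm_real, norm_norm, ← mul_assoc,
            mul_inv_cancel₀ (norm_ne_zero_iff.mpr hlam0), one_mul]
          exact (κ _).norm_conjContinuousAlgEquiv_le _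
      _ ≤ _ := le_csSup hbdd ⟨_, _, div_norm_mem_sector hlam, by simp [hlam0],
          hunit lam hlam hlam0, rfl⟩

/-- Let `A` be a closed densely defined operator in a Banach space
`X` and `κ_ρ` (`ρ > 0`) a group of isometries of `X` leaving `D(A)` invariant and
satisfying the dilation relation `λ - A = ρ² κ_ρ((λ/ρ²) - A)κ_ρ⁻¹`.  If the spectrum
of `A` is contained in `ℂ\S°_φ` for some `φ ∈ (0,π)`, then `-A` is sectorial of
angle `θ` for every `θ ∈ [0,φ)`: indeed
`|λ|(λ-A)⁻¹ = κ_{√|λ|}((λ/|λ|)-A)⁻¹κ_{√|λ|}⁻¹` for `λ ∈ S_θ\{0}`, so that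
`|λ|‖(λ-A)⁻¹‖ ≤ sup_{|μ|=1, μ∈S_θ}‖(μ-A)⁻¹‖ < ∞`. -/
theorem statement11
    {X : Type u} [NormedAddCommGroup X] [NormedSpace ℂ X] [CompleteSpace X]
    (A : X →ₗ.[ℂ] X)
    (hclosed : IsClosed (A.graph : Set (X × X)))
    (hdense : Dense (A.domain : Set X))
    (κ : ℝ → (X ≃ₗᵢ[ℂ] X))
    -- κ_ρ leaves D(A) invariant:
    (hκdom : ∀ ρ : ℝ, 0 < ρ → ∀ u : X, u ∈ A.domain ↔ (κ ρ) u ∈ A.domain)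
    -- the dilation relation λ - A = ρ² κ_ρ ((λ/ρ²) - A) κ_ρ⁻¹:
    (hrel : ∀ (ρ : ℝ), 0 < ρ → ∀ (lam : ℂ) (u : X) (hu : u ∈ A.domain)
        (hu' : (κ ρ).symm u ∈ A.domain),
        lam • u - A ⟨u, hu⟩ =
          ((ρ : ℂ) ^ 2) • (κ ρ)
            ((lam / (ρ : ℂ) ^ 2) • ((κ ρ).symm u) - A ⟨(κ ρ).symm u, hu'⟩))
    (φ : ℝ) (hφ0 : 0 < φ) (hφπ : φ < Real.pi)
    -- the spectrum of A is contained in ℂ\S°_φ: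
    (hspec : ∀ lam : ℂ, lam ≠ 0 → |lam.arg| < φ →
      ∃ Rl : X →L[ℂ] X, IsResolventAt' A lam Rl) :
    ∀ θ : ℝ, 0 ≤ θ → θ < φ →
      ∃ Rfam : ℂ → X →L[ℂ] X,
        -- -A is sectorial of angle θ:
        (∀ lam ∈ Sector θ, lam ≠ 0 → IsResolventAt' A lam (Rfam lam)) ∧
        -- the conjugation identity |λ|(λ-A)⁻¹ = κ_{√|λ|}((λ/|λ|)-A)⁻¹κ_{√|λ|}⁻¹:
        (∀ lam ∈ Sector θ, lam ≠ 0 → ∀ R1 : X →L[ℂ] X,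
          IsResolventAt' A (lam / (‖lam‖ : ℂ)) R1 → ∀ x : X,
            (‖lam‖ : ℂ) • Rfam lam x =
              (κ (Real.sqrt ‖lam‖)) (R1 ((κ (Real.sqrt ‖lam‖)).symm x))) ∧
        -- the uniform bound:
        BddAbove {r : ℝ | ∃ (μ : ℂ) (R1 : X →L[ℂ] X),
            μ ∈ Sector θ ∧ ‖μ‖ = 1 ∧ IsResolventAt' A μ R1 ∧ r = ‖R1‖} ∧
        (∀ lam ∈ Sector θ, lam ≠ 0 →
          ‖lam‖ * ‖Rfam lam‖ ≤ sSup {r : ℝ | ∃ (μ : ℂ) (R1 : X →L[ℂ] X),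
            μ ∈ Sector θ ∧ ‖μ‖ = 1 ∧ IsResolventAt' A μ R1 ∧ r = ‖R1‖}) :=
  statement11_general A κ hκdom hrel φ hspec
end
end
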